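/- arXiv:2003.01591 — 6 statements merged into one kernel-verified Lean document; each statement's English description precedes it below -/
import Mathlib

section
/- Let n ≥ 1, and let G₁ = (Fin n, A₁) and G₂ = (Fin n, A₂) be connected graphs (self-loops allowed) with adjacency matrices M₁ and M₂. Let M be the (2n)×(2n) block-diagonal matrix with diagonal blocks M₁ and M₂ (the adjacency matrix of the disjoint union G₁ ⊔ G₂). Then G₁ ≅ G₂ if and only if there exist a permutation π of Fin (2n), with associated permutation matrix P, and an n×n 0-1 matrix B such that Pᵀ · M · P = I₂ ⊗ₖ B, where I₂ is the 2×2 identity matrix. -/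
/-!
Conjugating a 0-1 matrix by a permutation matrix is relabelling the vertices of its graph, and
`I₂ ⊗ₖ B` is the adjacency matrix of two disjoint copies of the graph `H` of `B`; so the right-hand
side says `G₁ ⊔ G₂ ≅ H ⊔ H` for some `H`. Given `G₁ ≅ G₂`, take `H = G₁`. Conversely, an
isomorphism `G₁ ⊔ G₂ ≅ H ⊔ H` maps each connected `Gᵢ` into a single copy of `H`, injectively and
hence, by counting, bijectively; thus `G₁ ≅ H ≅ G₂`.
-/

open Kronecker Matrix

/-- Graph isomorphism between adjacency relations. -/
def IsIso {V₁ : Type*} {V₂ : Type*} (A₁ : V₁ → V₁ → Prop) (A₂ : V₂ → V₂ → Prop) : Prop :=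
  ∃ e : V₁ ≃ V₂, ∀ u v, A₁ u v ↔ A₂ (e u) (e v)

/-- Connectedness: the reflexive-transitive closure relates every pair of vertices. -/
def Conn {V : Type*} (A : V → V → Prop) : Prop :=
  ∀ u v : V, Relation.ReflTransGen A u v

/-- Adjacency matrix (over ℕ) of an adjacency relation on `Fin n`:
the `(u,v)` entry is `1` if `A u v` and `0` otherwise. -/
noncomputable def adjMat {n : ℕ} (A : Fin n → Fin n → Prop) : Matrix (Fin n) (Fin n) ℕ :=
  Matrix.of fun u v => @ite ℕ (A u v) (Classical.propDecidable _) 1 0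

/-- The `(2n)×(2n)` block-diagonal matrix with diagonal blocks `M₁`, `M₂`
(the adjacency matrix of a disjoint union). -/
def blockDiag2 {n : ℕ} (M₁ M₂ : Matrix (Fin n) (Fin n) ℕ) :
    Matrix (Fin (2 * n)) (Fin (2 * n)) ℕ :=
  (Matrix.fromBlocks M₁ 0 0 M₂).submatrix
    (fun i => finSumFinEquiv.symm (Fin.cast (two_mul n) i))
    (fun j => finSumFinEquiv.symm (Fin.cast (two_mul n) j))

/-- The Kronecker product of a `2×2` matrix with an `n×n` matrix, reindexed
as a `(2n)×(2n)` matrix. -/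
def kron2 {n : ℕ} (A : Matrix (Fin 2) (Fin 2) ℕ) (B : Matrix (Fin n) (Fin n) ℕ) :
    Matrix (Fin (2 * n)) (Fin (2 * n)) ℕ :=
  (A ⊗ₖ B).submatrix (fun i => finProdFinEquiv.symm i) (fun j => finProdFinEquiv.symm j)

/-- A 0-1 matrix: every entry is `0` or `1`. -/
def IsZeroOne {I : Type*} {J : Type*} (M : Matrix I J ℕ) : Prop :=
  ∀ i j, M i j = 0 ∨ M i j = 1

open Equiv

theorem isIso_iff_nonempty_relIso {α β : Type*} {r : α → α → Prop} {s : β → β → Prop} :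
    IsIso r s ↔ Nonempty (r ≃r s) :=
  ⟨fun ⟨e, he⟩ => ⟨⟨e, (he _ _).symm⟩⟩, fun ⟨f⟩ => ⟨f.toEquiv, fun _ _ => f.map_rel_iff.symm⟩⟩

theorem isIso_preimage_iff {α α' β β' : Type*} {r : α → α → Prop} {s : β → β → Prop}
    (e₁ : α' ≃ α) (e₂ : β' ≃ β) : IsIso (e₁ ⁻¹'o r) (e₂ ⁻¹'o s) ↔ IsIso r s := by
  simp only [isIso_iff_nonempty_relIso]
  exact ⟨fun ⟨f⟩ => ⟨((RelIso.preimage e₁ r).symm.trans f).trans (RelIso.preimage e₂ s)⟩,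
    fun ⟨f⟩ => ⟨((RelIso.preimage e₁ r).trans f).trans (RelIso.preimage e₂ s).symm⟩⟩

theorem Conn.apply_eq_of_forall_rel {V β : Type*} {A : V → V → Prop} (hc : Conn A) {φ : V → β}
    (h : ∀ u v, A u v → φ u = φ v) (u v : V) : φ u = φ v := by
  induction hc u v with
  | refl => rfl
  | tail _ huv ih => exact ih.trans (h _ _ huv)

def RelIso.sumLiftRelCongr {α β γ δ : Type*} {r : α → α → Prop} {s : β → β → Prop}
    {t : γ → γ → Prop} {u : δ → δ → Prop} (e₁ : r ≃r s) (e₂ : t ≃r u) :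
    Sum.LiftRel r t ≃r Sum.LiftRel s u where
  toEquiv := e₁.toEquiv.sumCongr e₂.toEquiv
  map_rel_iff' := by
    rintro (a | a) (b | b) <;> simp [e₁.map_rel_iff, e₂.map_rel_iff]

def copies (ι : Type*) {V : Type*} (R : V → V → Prop) : ι × V → ι × V → Prop :=
  fun p q => p.1 = q.1 ∧ R p.2 q.2

def sumLiftRelSelfIsoCopies {V : Type*} (R : V → V → Prop) :
    Sum.LiftRel R R ≃r copies (Fin 2) R where
  toEquiv := ((prodCongr finTwoEquiv (Equiv.refl V)).trans (boolProdEquivSum V)).symm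
  map_rel_iff' := by rintro (a | a) (b | b) <;> simp [copies, finTwoEquiv]

theorem Conn.nonempty_relIso_of_relEmbedding_copies {V ι : Type*} [Finite V]
    {A R : V → V → Prop} (hc : Conn A) (f : A ↪r copies ι R) : Nonempty (A ≃r R) := by
  have hfst : ∀ u v, (f u).1 = (f v).1 :=
    hc.apply_eq_of_forall_rel fun u v huv => (f.map_rel_iff.mpr huv).1
  have hinj : Function.Injective fun u => (f u).2 := fun u v huv =>
    f.injective (Prod.ext (hfst u v) huv)
  refine ⟨⟨Equiv.ofBijective _ (Finite.injective_iff_bijective.mp hinj), fun {u v} => ?_⟩⟩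
  rw [← f.map_rel_iff]
  exact (and_iff_right (hfst u v)).symm

theorem isIso_iff_exists_isIso_sumLiftRel_copies {V : Type*} [Finite V] {A₁ A₂ : V → V → Prop}
    (hc₁ : Conn A₁) (hc₂ : Conn A₂) :
    IsIso A₁ A₂ ↔ ∃ R : V → V → Prop, IsIso (Sum.LiftRel A₁ A₂) (copies (Fin 2) R) := by
  simp only [isIso_iff_nonempty_relIso]
  constructor
  · rintro ⟨e⟩
    exact ⟨A₁, ⟨((RelIso.refl A₁).sumLiftRelCongr e.symm).trans (sumLiftRelSelfIsoCopies A₁)⟩⟩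
  · rintro ⟨R, ⟨f⟩⟩
    obtain ⟨e₁⟩ := hc₁.nonempty_relIso_of_relEmbedding_copies
      ((RelEmbedding.sumLiftRelInl A₁ A₂).trans f.toRelEmbedding)
    obtain ⟨e₂⟩ := hc₂.nonempty_relIso_of_relEmbedding_copies
      ((RelEmbedding.sumLiftRelInr A₁ A₂).trans f.toRelEmbedding)
    exact ⟨e₁.trans e₂.symm⟩

open Classical in
noncomputable def relMatrix {α β : Type*} (R : α → β → Prop) : Matrix α β ℕ :=
  Matrix.of fun a b => if R a b then 1 else 0

section relMatrix

variable {α β γ δ : Type*}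

open Classical in
@[simp]
theorem relMatrix_apply (R : α → β → Prop) (a : α) (b : β) :
    relMatrix R a b = if R a b then 1 else 0 :=
  rfl

theorem relMatrix_injective : Function.Injective (relMatrix : (α → β → Prop) → Matrix α β ℕ) := by
  intro R S h
  funext a b
  have hab := congrFun (congrFun h a) b
  simp only [relMatrix_apply] at hab
  by_cases hR : R a b <;> by_cases hS : S a b <;> simp_all

theorem isZeroOne_iff_exists_relMatrix {B : Matrix α β ℕ} :
    IsZeroOne B ↔ ∃ R : α → β → Prop, relMatrix R = B := by
  constructor
  · intro hB
    refine ⟨fun a b => B a b = 1, Matrix.ext fun a b => ?_⟩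
    rcases hB a b with h | h <;> simp [h]
  · rintro ⟨R, rfl⟩ a b
    by_cases h : R a b <;> simp [h]

theorem submatrix_relMatrix (R : α → β → Prop) (f : γ → α) (g : δ → β) :
    (relMatrix R).submatrix f g = relMatrix fun c d => R (f c) (g d) :=
  rfl

theorem fromBlocks_relMatrix (R : α → γ → Prop) (S : β → δ → Prop) :
    Matrix.fromBlocks (relMatrix R) 0 0 (relMatrix S) = relMatrix (Sum.LiftRel R S) := by
  ext (a | a) (b | b)
  · by_cases h : R a b <;> simp [h]
  · simp
  · simp
  · by_cases h : S a b <;> simp [h]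

theorem one_kronecker_relMatrix {ι : Type*} [DecidableEq ι] (R : α → α → Prop) :
    (1 : Matrix ι ι ℕ) ⊗ₖ relMatrix R = relMatrix (copies ι R) := by
  ext ⟨i, a⟩ ⟨j, b⟩
  by_cases hij : i = j <;> by_cases hR : R a b <;> simp [copies, hij, hR]

end relMatrix

theorem permMatrix_transpose_mul_mul_permMatrix {n R : Type*} [Fintype n] [DecidableEq n]
    [NonAssocSemiring R] (σ : Perm n) (M : Matrix n n R) :
    (σ.permMatrix R)ᵀ * M * σ.permMatrix R = M.submatrix σ.symm σ.symm := by
  rw [Matrix.transpose_permMatrix, Perm.permMatrix, Perm.permMatrix,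
    PEquiv.toMatrix_toPEquiv_mul, PEquiv.mul_toMatrix_toPEquiv]
  rfl

theorem exists_permMatrix_conj_relMatrix_eq_iff {α : Type*} [Fintype α] [DecidableEq α]
    (A B : α → α → Prop) :
    (∃ π : Perm α, (π.permMatrix ℕ)ᵀ * relMatrix A * π.permMatrix ℕ = relMatrix B) ↔
      IsIso A B := by
  simp only [permMatrix_transpose_mul_mul_permMatrix, submatrix_relMatrix,
    relMatrix_injective.eq_iff]
  constructor
  · rintro ⟨π, rfl⟩
    exact ⟨π, fun u v => by simp⟩
  · rintro ⟨e, he⟩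
    exact ⟨e, funext₂ fun a b => propext ((he _ _).trans (by simp))⟩

theorem adjMat_eq_relMatrix {n : ℕ} (A : Fin n → Fin n → Prop) : adjMat A = relMatrix A :=
  rfl

theorem blockDiag2_relMatrix {n : ℕ} (R₁ R₂ : Fin n → Fin n → Prop) :
    blockDiag2 (relMatrix R₁) (relMatrix R₂) =
      relMatrix ((finCongr (two_mul n)).trans finSumFinEquiv.symm ⁻¹'o Sum.LiftRel R₁ R₂) := by
  rw [blockDiag2, fromBlocks_relMatrix]
  rfl

theorem kron2_one_relMatrix {n : ℕ} (R : Fin n → Fin n → Prop) :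
    kron2 1 (relMatrix R) = relMatrix (finProdFinEquiv.symm ⁻¹'o copies (Fin 2) R) := by
  rw [kron2, one_kronecker_relMatrix]
  rfl

theorem stmt0_general (n : ℕ)
    (A₁ A₂ : Fin n → Fin n → Prop)
    (hc₁ : Conn A₁) (hc₂ : Conn A₂)
    (M₁ M₂ : Matrix (Fin n) (Fin n) ℕ)
    (hM₁ : M₁ = adjMat A₁) (hM₂ : M₂ = adjMat A₂)
    (M : Matrix (Fin (2 * n)) (Fin (2 * n)) ℕ) (hM : M = blockDiag2 M₁ M₂) :
    IsIso A₁ A₂ ↔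
      ∃ (π : Equiv.Perm (Fin (2 * n))) (B : Matrix (Fin n) (Fin n) ℕ),
        IsZeroOne B ∧
        (π.permMatrix ℕ)ᵀ * M * (π.permMatrix ℕ) = kron2 (1 : Matrix (Fin 2) (Fin 2) ℕ) B := by
  subst hM₁ hM₂ hM
  rw [isIso_iff_exists_isIso_sumLiftRel_copies hc₁ hc₂, exists_comm]
  simp only [isZeroOne_iff_exists_relMatrix, exists_and_left, exists_exists_eq_and]
  refine exists_congr fun R => ?_
  rw [adjMat_eq_relMatrix, adjMat_eq_relMatrix, blockDiag2_relMatrix, kron2_one_relMatrix,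
    exists_permMatrix_conj_relMatrix_eq_iff, isIso_preimage_iff]

/-- Lemma 1 of the paper. Two connected graphs `G₁ = (Fin n, A₁)`
and `G₂ = (Fin n, A₂)` (self-loops allowed) are isomorphic iff there are a permutation
`π` of `Fin (2n)` (with permutation matrix `P`) and an `n×n` 0-1 matrix `B` such that
`Pᵀ * M * P = I₂ ⊗ₖ B`, where `M` is the block-diagonal matrix with blocks the
adjacency matrices of `G₁` and `G₂`. -/
theorem stmt0 (n : ℕ) (hn : 1 ≤ n)
    (A₁ A₂ : Fin n → Fin n → Prop) (hs₁ : Symmetric A₁) (hs₂ : Symmetric A₂)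
    (hc₁ : Conn A₁) (hc₂ : Conn A₂)
    (M₁ M₂ : Matrix (Fin n) (Fin n) ℕ)
    (hM₁ : M₁ = adjMat A₁) (hM₂ : M₂ = adjMat A₂)
    (M : Matrix (Fin (2 * n)) (Fin (2 * n)) ℕ) (hM : M = blockDiag2 M₁ M₂) :
    IsIso A₁ A₂ ↔
      ∃ (π : Equiv.Perm (Fin (2 * n))) (B : Matrix (Fin n) (Fin n) ℕ),
        IsZeroOne B ∧
        (π.permMatrix ℕ)ᵀ * M * (π.permMatrix ℕ) = kron2 (1 : Matrix (Fin 2) (Fin 2) ℕ) B :=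
  stmt0_general n A₁ A₂ hc₁ hc₂ M₁ M₂ hM₁ hM₂ M hM
end

section
/- Let n ≥ 1, let G₁ = (Fin n, A₁) and G₂ = (Fin n, A₂) be connected graphs (self-loops allowed) with adjacency matrices M₁, M₂, and let M be the (2n)×(2n) block-diagonal matrix with blocks M₁ and M₂. Suppose π is a permutation of Fin (2n), with permutation matrix P, such that Pᵀ · M · P = I₂ ⊗ₖ B for some n×n 0-1 matrix B. Then π maps the set {i : Fin (2n) | (i : ℕ) < n} bijectively onto either {i | (i : ℕ) < n} or onto {i | n ≤ (i : ℕ)}; in particular each of G₁ and G₂ is isomorphic to the graph on Fin n with adjacency matrix B. -/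
/-!
Pulling the matrix identity back along `π` turns it into a graph isomorphism from the disjoint
union `G₁ ⊔ G₂` onto two disjoint copies of the graph of `B`. No edge joins different copies, so
by connectedness each `Gᵢ` lands inside a single copy; both cannot land in the same one, since the
other copy would then not be hit at all. So each `Gᵢ` is mapped onto a whole copy, which is an
isomorphism onto the graph of `B`.
-/

open Kronecker Matrix

def copiesRel (ι : Type*) {W : Type*} (R : W → W → Prop) : ι × W → ι × W → Prop :=
  fun p q => p.1 = q.1 ∧ R p.2 q.2

theorem Conn.eq_of_forall_adj {V α : Type*} {A : V → V → Prop} (hA : Conn A) {f : V → α}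
    (hf : ∀ u v, A u v → f u = f v) (u v : V) : f u = f v := by
  induction hA u v with
  | refl => rfl
  | tail _ hab ih => exact ih.trans (hf _ _ hab)

section TwoComponents

variable {V₁ V₂ ι W : Type*} {A₁ : V₁ → V₁ → Prop} {A₂ : V₂ → V₂ → Prop} {R : W → W → Prop}
  {φ : V₁ ⊕ V₂ ≃ ι × W}

theorem liftRel_iff_copiesRel_sumComm
    (hφ : ∀ p q, Sum.LiftRel A₁ A₂ p q ↔ copiesRel ι R (φ p) (φ q)) (p q : V₂ ⊕ V₁) :
    Sum.LiftRel A₂ A₁ p q ↔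
      copiesRel ι R (((Equiv.sumComm V₂ V₁).trans φ) p) (((Equiv.sumComm V₂ V₁).trans φ) q) := by
  rw [← Sum.liftRel_swap_iff]
  exact hφ p.swap q.swap

theorem exists_fst_eq_iff_isLeft [Nontrivial ι] [Nonempty V₁]
    (hφ : ∀ p q, Sum.LiftRel A₁ A₂ p q ↔ copiesRel ι R (φ p) (φ q))
    (hc₁ : Conn A₁) (hc₂ : Conn A₂) : ∃ c, ∀ p, (φ p).1 = c ↔ p.isLeft := by
  obtain ⟨u₀⟩ := ‹Nonempty V₁›
  have hl (u : V₁) : (φ (.inl u)).1 = (φ (.inl u₀)).1 :=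
    hc₁.eq_of_forall_adj (fun a b hab => ((hφ _ _).1 (.inl hab)).1) u u₀
  have hr : ∀ v w, (φ (.inr v)).1 = (φ (.inr w)).1 :=
    hc₂.eq_of_forall_adj fun a b hab => ((hφ _ _).1 (.inr hab)).1
  refine ⟨(φ (.inl u₀)).1, ?_⟩
  rintro (u | v)
  · simpa using hl u
  · simp only [Sum.isLeft_inr, Bool.false_eq_true, iff_false]
    intro hv
    -- otherwise no vertex would be sent to a second copy
    obtain ⟨c', hc'⟩ := exists_ne (φ (.inl u₀)).1
    rcases h : φ.symm (c', (φ (.inl u₀)).2) with u | w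
    · exact hc' (by rw [← hl u, ← h, Equiv.apply_symm_apply])
    · exact hc' (by rw [← hv, ← hr w v, ← h, Equiv.apply_symm_apply])

theorem isIso_of_fst_eq_iff_isLeft
    (hφ : ∀ p q, Sum.LiftRel A₁ A₂ p q ↔ copiesRel ι R (φ p) (φ q)) {c : ι}
    (hc : ∀ p, (φ p).1 = c ↔ p.isLeft) : IsIso A₁ R := by
  have hl (u : V₁) : (φ (.inl u)).1 = c := (hc _).2 rfl
  have hbij : Function.Bijective fun u => (φ (.inl u)).2 := by
    refine ⟨fun u v huv => ?_, fun w => ?_⟩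
    · exact Sum.inl_injective (φ.injective (Prod.ext ((hl u).trans (hl v).symm) huv))
    · obtain ⟨u, hu⟩ := Sum.isLeft_iff.1 ((hc (φ.symm (c, w))).1 (by simp))
      exact ⟨u, by simp [← hu]⟩
  refine ⟨Equiv.ofBijective _ hbij, fun u v => ?_⟩
  exact Sum.liftRel_inl_inl.symm.trans ((hφ _ _).trans (by simp [copiesRel, hl]))

end TwoComponents

theorem transpose_permMatrix_mul_mul_permMatrix {n R : Type*} [DecidableEq n] [Fintype n]
    [NonAssocSemiring R] (σ : Equiv.Perm n) (M : Matrix n n R) :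
    (σ.permMatrix R)ᵀ * M * σ.permMatrix R = M.submatrix σ.symm σ.symm := by
  rw [transpose_permMatrix, PEquiv.toMatrix_toPEquiv_mul, PEquiv.mul_toMatrix_toPEquiv]
  rfl

theorem adjMat_eq_one_iff {n : ℕ} (A : Fin n → Fin n → Prop) (u v : Fin n) :
    adjMat A u v = 1 ↔ A u v := by
  by_cases h : A u v <;> simp [adjMat, h]

theorem fromBlocks_adjMat_eq_one_iff {m n : ℕ} (A₁ : Fin m → Fin m → Prop)
    (A₂ : Fin n → Fin n → Prop) (p q : Fin m ⊕ Fin n) :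
    fromBlocks (adjMat A₁) 0 0 (adjMat A₂) p q = 1 ↔ Sum.LiftRel A₁ A₂ p q := by
  rcases p with u | u <;> rcases q with v | v <;> simp [adjMat_eq_one_iff]

theorem one_kronecker_eq_one_iff {ι W R : Type*} [DecidableEq ι] [MulZeroOneClass R]
    [NeZero (1 : R)] (B : Matrix W W R) (p q : ι × W) :
    ((1 : Matrix ι ι R) ⊗ₖ B) p q = 1 ↔ copiesRel ι (fun u v => B u v = 1) p q := by
  by_cases h : p.1 = q.1 <;> simp [copiesRel, one_apply, h]

theorem isLeft_finSumFinEquiv_symm_apply {m n : ℕ} (i : Fin (m + n)) :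
    (finSumFinEquiv.symm i).isLeft ↔ (i : ℕ) < m := by
  induction i using Fin.addCases <;> simp

theorem fst_finProdFinEquiv_symm_apply_eq_zero_iff {m n : ℕ} [NeZero m] (i : Fin (m * n)) :
    (finProdFinEquiv.symm i).1 = 0 ↔ (i : ℕ) < n := by
  simp only [finProdFinEquiv, Equiv.coe_fn_symm_mk, Fin.ext_iff, Fin.coe_divNat, Fin.val_zero,
    Nat.div_eq_zero_iff, or_iff_right_iff_imp]
  rintro rfl
  simpa using i.2

theorem kron2_eq_submatrix {n : ℕ} (A : Matrix (Fin 2) (Fin 2) ℕ)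
    (B : Matrix (Fin n) (Fin n) ℕ) :
    kron2 A B = (A ⊗ₖ B).submatrix finProdFinEquiv.symm finProdFinEquiv.symm :=
  rfl

def finTwoMulEquivSum (n : ℕ) : Fin (2 * n) ≃ Fin n ⊕ Fin n :=
  (finCongr (two_mul n)).trans finSumFinEquiv.symm

theorem blockDiag2_eq_submatrix {n : ℕ} (M₁ M₂ : Matrix (Fin n) (Fin n) ℕ) :
    blockDiag2 M₁ M₂ =
      (fromBlocks M₁ 0 0 M₂).submatrix (finTwoMulEquivSum n) (finTwoMulEquivSum n) :=
  rfl

theorem isLeft_finTwoMulEquivSum_apply {n : ℕ} (i : Fin (2 * n)) :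
    (finTwoMulEquivSum n i).isLeft ↔ (i : ℕ) < n :=
  isLeft_finSumFinEquiv_symm_apply _

theorem stmt1_general (n : ℕ) (hn : 1 ≤ n)
    (A₁ A₂ : Fin n → Fin n → Prop)
    (hc₁ : Conn A₁) (hc₂ : Conn A₂)
    (M₁ M₂ : Matrix (Fin n) (Fin n) ℕ)
    (hM₁ : M₁ = adjMat A₁) (hM₂ : M₂ = adjMat A₂)
    (M : Matrix (Fin (2 * n)) (Fin (2 * n)) ℕ) (hM : M = blockDiag2 M₁ M₂)
    (π : Equiv.Perm (Fin (2 * n))) (B : Matrix (Fin n) (Fin n) ℕ)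
    (h : (π.permMatrix ℕ)ᵀ * M * (π.permMatrix ℕ) = kron2 (1 : Matrix (Fin 2) (Fin 2) ℕ) B) :
    (Set.BijOn π {i : Fin (2 * n) | (i : ℕ) < n} {i : Fin (2 * n) | (i : ℕ) < n} ∨
     Set.BijOn π {i : Fin (2 * n) | (i : ℕ) < n} {i : Fin (2 * n) | n ≤ (i : ℕ)}) ∧
    IsIso A₁ (fun u v => B u v = 1) ∧ IsIso A₂ (fun u v => B u v = 1) := by
  subst hM hM₁ hM₂
  rw [transpose_permMatrix_mul_mul_permMatrix, blockDiag2_eq_submatrix, kron2_eq_submatrix,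
    submatrix_submatrix] at h
  set σ := finTwoMulEquivSum n
  let φ := σ.symm.trans (π.trans finProdFinEquiv.symm)
  have hφ (p q : Fin n ⊕ Fin n) :
      Sum.LiftRel A₁ A₂ p q ↔ copiesRel (Fin 2) (fun u v => B u v = 1) (φ p) (φ q) := by
    rw [← fromBlocks_adjMat_eq_one_iff, ← one_kronecker_eq_one_iff]
    have hpq := congr_fun₂ h (π (σ.symm p)) (π (σ.symm q))
    simp only [submatrix_apply, Function.comp_apply, Equiv.symm_apply_apply,
      Equiv.apply_symm_apply] at hpq
    rw [hpq]
    rfl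
  have : Nonempty (Fin n) := ⟨⟨0, hn⟩⟩
  obtain ⟨c, hc⟩ := exists_fst_eq_iff_isLeft hφ hc₁ hc₂
  obtain ⟨d, hd⟩ := exists_fst_eq_iff_isLeft (liftRel_iff_copiesRel_sumComm hφ) hc₂ hc₁
  refine ⟨?_, isIso_of_fst_eq_iff_isLeft hφ hc,
    isIso_of_fst_eq_iff_isLeft (liftRel_iff_copiesRel_sumComm hφ) hd⟩
  have hbij : Set.BijOn π {i | (i : ℕ) < n} {t | (finProdFinEquiv.symm t).1 = c} :=
    π.bijOn fun i => by
      simpa [φ, σ, isLeft_finTwoMulEquivSum_apply] using hc (σ i)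
  obtain rfl | rfl : c = 0 ∨ c = 1 := by omega
  · left
    convert hbij using 2
    ext t
    exact (fst_finProdFinEquiv_symm_apply_eq_zero_iff t).symm
  · right
    convert hbij using 2
    ext t
    rw [← not_lt, ← fst_finProdFinEquiv_symm_apply_eq_zero_iff]
    omega

/-- If `Pᵀ M P = I₂ ⊗ₖ B` where `M` is the block-diagonal matrix built
from the adjacency matrices of two connected graphs on `Fin n`, then the permutation `π`
maps `{i | i < n}` bijectively onto `{i | i < n}` or onto `{i | n ≤ i}`; in particular
each of the two graphs is isomorphic to the graph on `Fin n` with adjacency matrix `B`. -/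
theorem stmt1 (n : ℕ) (hn : 1 ≤ n)
    (A₁ A₂ : Fin n → Fin n → Prop) (hs₁ : Symmetric A₁) (hs₂ : Symmetric A₂)
    (hc₁ : Conn A₁) (hc₂ : Conn A₂)
    (M₁ M₂ : Matrix (Fin n) (Fin n) ℕ)
    (hM₁ : M₁ = adjMat A₁) (hM₂ : M₂ = adjMat A₂)
    (M : Matrix (Fin (2 * n)) (Fin (2 * n)) ℕ) (hM : M = blockDiag2 M₁ M₂)
    (π : Equiv.Perm (Fin (2 * n))) (B : Matrix (Fin n) (Fin n) ℕ) (hB : IsZeroOne B)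
    (h : (π.permMatrix ℕ)ᵀ * M * (π.permMatrix ℕ) = kron2 (1 : Matrix (Fin 2) (Fin 2) ℕ) B) :
    (Set.BijOn π {i : Fin (2 * n) | (i : ℕ) < n} {i : Fin (2 * n) | (i : ℕ) < n} ∨
     Set.BijOn π {i : Fin (2 * n) | (i : ℕ) < n} {i : Fin (2 * n) | n ≤ (i : ℕ)}) ∧
    IsIso A₁ (fun u v => B u v = 1) ∧ IsIso A₂ (fun u v => B u v = 1) :=
  stmt1_general n hn A₁ A₂ hc₁ hc₂ M₁ M₂ hM₁ hM₂ M hM π B h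
end

section
/- Let G₁ and G₂ be graphs in the class 𝒢, both with the same (prime) number n of vertices, the same number m of edges, and the same number s of loops. Then the disjoint union G₁ ⊔ G₂ is composite with respect to the direct product if and only if G₁ ≅ G₂. -/
open Kronecker

/-- Bipartiteness via a 2-coloring. -/
def Bipartite {V : Type*} (A : V → V → Prop) : Prop :=
  ∃ c : V → Bool, ∀ u v, A u v → c u ≠ c v

/-- Direct (Kronecker/tensor/cardinal) product of graphs. -/
def DProd {V₁ : Type*} {V₂ : Type*} (A₁ : V₁ → V₁ → Prop) (A₂ : V₂ → V₂ → Prop) :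
    V₁ × V₂ → V₁ × V₂ → Prop :=
  fun p q => A₁ p.1 q.1 ∧ A₂ p.2 q.2

/-- Disjoint union of graphs. -/
def DUnion {V₁ : Type*} {V₂ : Type*} (A₁ : V₁ → V₁ → Prop) (A₂ : V₂ → V₂ → Prop) :
    V₁ ⊕ V₂ → V₁ ⊕ V₂ → Prop
  | Sum.inl u, Sum.inl v => A₁ u v
  | Sum.inr u, Sum.inr v => A₂ u v
  | _, _ => False

/-- A graph is composite w.r.t. the direct product if it is isomorphic to a direct
product of graphs each having at least two vertices. -/
def Composite {V : Type*} (A : V → V → Prop) : Prop :=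
  ∃ (V₁ V₂ : Type) (A₁ : V₁ → V₁ → Prop) (A₂ : V₂ → V₂ → Prop),
    Symmetric A₁ ∧ Symmetric A₂ ∧
    2 ≤ Nat.card V₁ ∧ 2 ≤ Nat.card V₂ ∧
    IsIso A (DProd A₁ A₂)

/-- Number of edges (unordered pairs, loops included). -/
noncomputable def numEdges {V : Type*} {A : V → V → Prop} (h : Symmetric A) : ℕ :=
  (Sym2.fromRel (⟨fun _ _ hab => h hab⟩ : Std.Symm A)).ncard

/-- Number of loops. -/
noncomputable def numLoops {V : Type*} (A : V → V → Prop) : ℕ :=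
  {u : V | A u u}.ncard

/-- The class 𝒢 of the paper. -/
def InClassG {n : ℕ} {A : Fin n → Fin n → Prop} (h : Symmetric A) : Prop :=
  Conn A ∧ ¬ Bipartite A ∧ n.Prime ∧
  numLoops A < numEdges h ∧
  ¬ 2 ∣ (2 * numEdges h - numLoops A) ∧
  ¬ 3 ∣ (2 * numEdges h - numLoops A)

/-!
If `G₁ ⊔ G₂ ≅ H₁ ⊗ H₂` with both factors nontrivial, then `|H₁| |H₂| = 2n` forces one factor,
say `H₁`, to have two vertices. Counting nonzero adjacency entries gives
`a(H₁) a(H₂) = 2 (2m - s)`, and `2m - s` is prime to `6`, so `a(H₁) ∉ {3, 4}`. Of the remaining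
symmetric relations on two vertices, one with an isolated vertex is impossible since `G₁ ⊔ G₂`
has none, and a single non-loop edge would make `G₁` bipartite. So `H₁` is two loops, hence
`H₁ ⊗ H₂ ≅ H₂ ⊔ H₂`, and the connected graphs `G₁`, `G₂` must both be copies of `H₂`.
Conversely `G ⊔ G ≅ H ⊗ G` when `H` consists of two loops.
-/

section Iso

variable {V W X : Type*} {A : V → V → Prop} {B : W → W → Prop} {C : X → X → Prop}

theorem IsIso.symm (h : IsIso A B) : IsIso B A := by
  obtain ⟨e, he⟩ := h
  exact ⟨e.symm, fun u v => by simp [he]⟩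

theorem IsIso.trans (h₁ : IsIso A B) (h₂ : IsIso B C) : IsIso A C := by
  obtain ⟨e₁, he₁⟩ := h₁
  obtain ⟨e₂, he₂⟩ := h₂
  exact ⟨e₁.trans e₂, fun u v => (he₁ u v).trans (he₂ _ _)⟩

theorem isIso_comap (e : V ≃ W) (B : W → W → Prop) : IsIso (fun u v => B (e u) (e v)) B :=
  ⟨e, fun _ _ => Iff.rfl⟩

theorem IsIso.dprod_left (h : IsIso A B) (C : X → X → Prop) : IsIso (DProd A C) (DProd B C) := by
  obtain ⟨e, he⟩ := h
  exact ⟨e.prodCongr (Equiv.refl X), fun p q => by simp [DProd, he]⟩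

theorem IsIso.dunion_right (h : IsIso A B) (C : X → X → Prop) :
    IsIso (DUnion C A) (DUnion C B) := by
  obtain ⟨e, he⟩ := h
  refine ⟨(Equiv.refl X).sumCongr e, ?_⟩
  rintro (x | u) (y | v) <;> simp [DUnion, he]

theorem isIso_dprod_comm (A : V → V → Prop) (B : W → W → Prop) :
    IsIso (DProd A B) (DProd B A) :=
  ⟨Equiv.prodComm V W, fun _ _ => and_comm⟩

theorem isIso_dprod_eq_dunion (A : V → V → Prop) : IsIso (DProd (@Eq Bool) A) (DUnion A A) := by
  refine ⟨Equiv.boolProdEquivSum V, ?_⟩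
  rintro ⟨_ | _, u⟩ ⟨_ | _, v⟩ <;> simp [DProd, DUnion]

theorem dunion_swap {x y : V ⊕ W} : DUnion B A x.swap y.swap ↔ DUnion A B x y := by
  rcases x with x | x <;> rcases y with y | y <;> rfl

theorem isLeft_eq_of_dunion {x y : V ⊕ W} (h : DUnion A B x y) : x.isLeft = y.isLeft := by
  rcases x with x | x <;> rcases y with y | y <;> first | rfl | exact h.elim

end Iso

section Adjacency

variable {V W X : Type*} {A : V → V → Prop} {B : W → W → Prop}

theorem Conn.apply_eq {f : V → X} (hA : Conn A) (hf : ∀ u v, A u v → f u = f v) (u v : V) :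
    f u = f v := by
  induction hA u v with
  | refl => rfl
  | tail _ hvw ih => exact ih.trans (hf _ _ hvw)

theorem Conn.exists_adj [Nontrivial V] (hA : Conn A) (u : V) : ∃ v, A u v := by
  obtain ⟨w, hw⟩ := exists_ne u
  rcases (hA u w).cases_head with rfl | ⟨v, huv, -⟩
  · exact absurd rfl hw
  · exact ⟨v, huv⟩

theorem DUnion.exists_adj (hA : ∀ u, ∃ v, A u v) (hB : ∀ u, ∃ v, B u v) :
    ∀ x, ∃ y, DUnion A B x y
  | .inl u => let ⟨v, h⟩ := hA u; ⟨.inl v, h⟩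
  | .inr u => let ⟨v, h⟩ := hB u; ⟨.inr v, h⟩

theorem Bipartite.comap (hB : Bipartite B) (f : V → W) (hf : ∀ u v, A u v → B (f u) (f v)) :
    Bipartite A := by
  obtain ⟨c, hc⟩ := hB
  exact ⟨c ∘ f, fun u v huv => hc _ _ (hf u v huv)⟩

theorem Bipartite.dprod (hA : Bipartite A) (C : X → X → Prop) : Bipartite (DProd A C) :=
  hA.comap Prod.fst fun _ _ h => h.1

end Adjacency

section Components

variable {V₁ V₂ W₁ W₂ : Type*} {A₁ : V₁ → V₁ → Prop} {A₂ : V₂ → V₂ → Prop}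
  {B₁ : W₁ → W₁ → Prop} {B₂ : W₂ → W₂ → Prop}

theorem isIso_left_of_isLeft {f : V₁ ⊕ V₂ ≃ W₁ ⊕ W₂} (hf : ∀ x, (f x).isLeft = x.isLeft)
    (he : ∀ x y, DUnion A₁ A₂ x y ↔ DUnion B₁ B₂ (f x) (f y)) : IsIso A₁ B₁ := by
  let g : V₁ ≃ W₁ := Equiv.sumIsLeft.symm.trans
    ((f.subtypeEquiv fun x => by rw [hf]).trans Equiv.sumIsLeft)
  have hg : ∀ a, f (.inl a) = .inl (g a) := fun a => (Sum.inl_getLeft _ _).symm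
  refine ⟨g, fun a b => ?_⟩
  have hab := he (.inl a) (.inl b)
  rwa [hg, hg] at hab

theorem isIso_right_of_isLeft {f : V₁ ⊕ V₂ ≃ W₁ ⊕ W₂} (hf : ∀ x, (f x).isLeft = x.isLeft)
    (he : ∀ x y, DUnion A₁ A₂ x y ↔ DUnion B₁ B₂ (f x) (f y)) : IsIso A₂ B₂ :=
  isIso_left_of_isLeft (f := (Equiv.sumComm V₂ V₁).trans (f.trans (Equiv.sumComm W₁ W₂)))
    (fun x => by simp [← Sum.bnot_isLeft, hf])
    (fun x y => by simpa [dunion_swap] using he x.swap y.swap)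

/-- The side `(f x).isLeft` is constant on each connected summand, and surjectivity of `f` makes
the two summands land on different sides. -/
theorem IsIso.of_dunion [Nonempty W₁] [Nonempty W₂] (h₁ : Conn A₁) (h₂ : Conn A₂)
    (h : IsIso (DUnion A₁ A₂) (DUnion B₁ B₂)) :
    (IsIso A₁ B₁ ∧ IsIso A₂ B₂) ∨ (IsIso A₁ B₂ ∧ IsIso A₂ B₁) := by
  obtain ⟨f, hf⟩ := h
  have hside : ∀ x y, DUnion A₁ A₂ x y → (f x).isLeft = (f y).isLeft :=
    fun x y hxy => isLeft_eq_of_dunion ((hf x y).mp hxy)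
  have hinl := h₁.apply_eq (f := fun a => (f (.inl a)).isLeft) fun a b => hside (.inl a) (.inl b)
  have hinr := h₂.apply_eq (f := fun b => (f (.inr b)).isLeft) fun a b => hside (.inr a) (.inr b)
  obtain ⟨x₁, hx₁⟩ := f.surjective (.inl (Classical.arbitrary W₁))
  obtain ⟨x₂, hx₂⟩ := f.surjective (.inr (Classical.arbitrary W₂))
  rcases x₁ with a | b <;> rcases x₂ with a' | b'
  · simpa [hx₁, hx₂] using hinl a a'
  · have hf' : ∀ x, (f x).isLeft = x.isLeft := by
      rintro (c | c)
      · rw [hinl c a, hx₁]; rfl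
      · rw [hinr c b', hx₂]; rfl
    exact .inl ⟨isIso_left_of_isLeft hf' hf, isIso_right_of_isLeft hf' hf⟩
  · let f' := f.trans (Equiv.sumComm W₁ W₂)
    have hf' : ∀ x, (f' x).isLeft = x.isLeft := by
      rintro (c | c)
      · simp [f', ← Sum.bnot_isLeft, hinl c a', hx₂]
      · simp [f', hinr c b, hx₁]
    have he' : ∀ x y, DUnion A₁ A₂ x y ↔ DUnion B₂ B₁ (f' x) (f' y) := fun x y => by
      simpa [f', dunion_swap] using hf x y
    exact .inr ⟨isIso_left_of_isLeft hf' he', isIso_right_of_isLeft hf' he'⟩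
  · simpa [hx₁, hx₂] using hinr b b'

end Components

open Classical in
noncomputable def arcCount {V : Type*} [Fintype V] (A : V → V → Prop) : ℕ :=
  ∑ u, ∑ v, if A u v then 1 else 0

section ArcCount

variable {V W : Type*} [Fintype V] [Fintype W]

theorem arcCount_eq_of_isIso {A : V → V → Prop} {B : W → W → Prop} (h : IsIso A B) :
    arcCount A = arcCount B := by
  classical
  obtain ⟨e, he⟩ := h
  simp only [arcCount, he]
  exact (Fintype.sum_congr _ _ fun u => e.sum_comp fun y => if B (e u) y then 1 else 0).trans
    (e.sum_comp fun x => ∑ y, if B x y then 1 else 0)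

theorem arcCount_dprod (A : V → V → Prop) (B : W → W → Prop) :
    arcCount (DProd A B) = arcCount A * arcCount B := by
  simp only [arcCount, DProd, Fintype.sum_prod_type, Finset.sum_mul_sum, ite_zero_mul_ite_zero,
    one_mul]
  refine Fintype.sum_congr _ _ fun a => Fintype.sum_congr _ _ fun b =>
    Fintype.sum_congr _ _ fun c => Fintype.sum_congr _ _ fun d => ?_
  by_cases h : A a c ∧ B b d <;> simp only [h, ↓reduceIte]

theorem arcCount_dunion (A : V → V → Prop) (B : W → W → Prop) :
    arcCount (DUnion A B) = arcCount A + arcCount B := by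
  simp only [arcCount, Fintype.sum_sum_type, DUnion, ↓reduceIte, Finset.sum_const_zero, add_zero,
    zero_add]
  rfl

variable {A : V → V → Prop}

open Classical in
theorem numLoops_eq_sum (A : V → V → Prop) : numLoops A = ∑ u, if A u u then 1 else 0 := by
  rw [numLoops, Set.ncard_eq_toFinset_card', Set.toFinset_ofPred, Finset.card_filter]

open Classical in
theorem numEdges_eq_sum [LinearOrder V] (h : Symmetric A) :
    numEdges h = ∑ u, ∑ v, if u ≤ v ∧ A u v then 1 else 0 := by
  have hmem : ∀ z : Sym2 V, z ∈ Sym2.fromRel (⟨fun _ _ hab => h hab⟩ : Std.Symm A) ↔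
      A (Sym2.sortEquiv z).1.1 (Sym2.sortEquiv z).1.2 := by
    refine Sym2.ind fun a b => ?_
    rcases le_total a b with hab | hab
    · simp [hab]
    · simpa [hab, Sym2.fromRel_prop] using ⟨fun h' => h h', fun h' => h h'⟩
  rw [numEdges, ← Nat.card_coe_set_eq,
    Nat.card_congr ((Equiv.subtypeEquiv Sym2.sortEquiv hmem).trans
      (Equiv.subtypeSubtypeEquivSubtypeInter _ fun p : V × V => A p.1 p.2)),
    Nat.card_eq_fintype_card, Fintype.card_subtype, Finset.card_filter, Fintype.sum_prod_type]

/-- Choosing a linear order, a loop is counted on the diagonal and each other edge once above and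
once below it. -/
theorem arcCount_add_numLoops (h : Symmetric A) : arcCount A + numLoops A = 2 * numEdges h := by
  classical
  let : LinearOrder V := LinearOrder.lift' _ (Fintype.equivFin V).injective
  have hdiag : ∑ u, ∑ v, (if u = v ∧ A u v then 1 else 0) = numLoops A := by
    rw [numLoops_eq_sum]
    refine Fintype.sum_congr _ _ fun u =>
      (Finset.sum_eq_single u (fun v _ hvu => ?_) (by simp)).trans ?_
    · simp [Ne.symm hvu]
    · by_cases hA : A u u <;> simp [hA]
  have hsplit : ∀ u v, (if A u v then 1 else 0) + (if u = v ∧ A u v then 1 else 0) =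
      (if u ≤ v ∧ A u v then 1 else 0) + (if v ≤ u ∧ A v u then 1 else 0) := by
    intro u v
    by_cases hA : A u v
    · rcases lt_trichotomy u v with huv | rfl | huv
      · simp [hA, h hA, huv.le, huv.ne, huv.not_ge]
      · simp [hA]
      · simp [hA, h hA, huv.le, huv.ne', huv.not_ge]
    · have hA' : ¬ A v u := fun h' => hA (h h')
      simp [hA, hA']
  calc arcCount A + numLoops A
      = ∑ u, ∑ v, ((if A u v then 1 else 0) + if u = v ∧ A u v then 1 else 0) := by
        simp only [arcCount, ← hdiag, Finset.sum_add_distrib]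
    _ = ∑ u, ∑ v, ((if u ≤ v ∧ A u v then 1 else 0) + if v ≤ u ∧ A v u then 1 else 0) := by
        simp only [hsplit]
    _ = 2 * numEdges h := by
        rw [numEdges_eq_sum h]
        simp only [Finset.sum_add_distrib]
        rw [Finset.sum_comm (f := fun u v => if v ≤ u ∧ A v u then 1 else 0)]
        ring

end ArcCount

theorem bool_rel_cases {B : Bool → Bool → Prop} (hB : Symmetric B) :
    B = Eq ∨ Bipartite B ∨ (∃ x, ∀ y, ¬ B x y) ∨ arcCount B = 3 ∨ arcCount B = 4 := by
  have hB' : B true false ↔ B false true := ⟨fun h => hB h, fun h => hB h⟩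
  by_cases hq : B false true <;> by_cases hp : B false false <;> by_cases hr : B true true
  all_goals try
    (right; right; right
     simp only [arcCount, Fintype.sum_bool, hp, hq, hr, hB', ↓reduceIte, Nat.reduceAdd]
     decide)
  · exact .inr (.inl ⟨id, fun x y hxy => by cases x <;> cases y <;> simp_all⟩)
  · exact .inl (funext₂ fun x y => by cases x <;> cases y <;> simp_all)
  · exact .inr (.inr (.inl ⟨true, fun y => by cases y <;> simp_all⟩))
  · exact .inr (.inr (.inl ⟨false, fun y => by cases y <;> simp_all⟩))
  · exact .inr (.inr (.inl ⟨false, fun y => by cases y <;> simp_all⟩))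

theorem Nat.Prime.eq_two_or_eq_two_of_mul_eq {p a b : ℕ} (hp : p.Prime) (ha : 2 ≤ a)
    (hb : 2 ≤ b) (h : a * b = 2 * p) : a = 2 ∨ b = 2 := by
  have key : ∀ k c, 2 ≤ c → p * k * c = 2 * p → c = 2 := fun k c hc hkc => by
    have hkc' : k * c = 2 :=
      Nat.eq_of_mul_eq_mul_left hp.pos (by rw [← mul_assoc, hkc, mul_comm])
    have := Nat.le_of_dvd two_pos ⟨k, by rw [← hkc', mul_comm]⟩
    omega
  rcases hp.dvd_mul.mp (h ▸ dvd_mul_left p 2) with ⟨k, rfl⟩ | ⟨k, rfl⟩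
  · exact .inr (key k b hb h)
  · exact .inl (key k a ha (by rw [mul_comm]; exact h))

section Factor

variable {V₁ V₂ W₁ W₂ : Type*} [Fintype V₁] [Fintype V₂] [Fintype W₂] [Nontrivial V₁]
  [Nontrivial V₂] {A₁ : V₁ → V₁ → Prop} {A₂ : V₂ → V₂ → Prop} {C : W₂ → W₂ → Prop}

theorem isIso_of_isIso_dunion_dprod_bool {B : Bool → Bool → Prop} (hB : Symmetric B)
    (h₁ : Conn A₁) (h₂ : Conn A₂) (hbip : ¬ Bipartite A₁) (harc : arcCount A₂ = arcCount A₁)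
    (h2 : ¬ 2 ∣ arcCount A₁) (h3 : ¬ 3 ∣ arcCount A₁) (h : IsIso (DUnion A₁ A₂) (DProd B C)) :
    IsIso A₁ A₂ := by
  obtain ⟨e, he⟩ := id h
  have : Nonempty W₂ := ⟨(e (.inl (Classical.arbitrary V₁))).2⟩
  have hcount : arcCount B * arcCount C = 2 * arcCount A₁ := by
    rw [← arcCount_dprod, ← arcCount_eq_of_isIso h, arcCount_dunion, harc, two_mul]
  rcases bool_rel_cases hB with rfl | hBbip | ⟨x, hx⟩ | hB3 | hB4
  · rcases (h.trans (isIso_dprod_eq_dunion C)).of_dunion h₁ h₂ with ⟨h₁', h₂'⟩ | ⟨h₁', h₂'⟩ <;>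
      exact h₁'.trans h₂'.symm
  · exact absurd ((hBbip.dprod C).comap _ fun u v huv => (he (.inl u) (.inl v)).mp huv) hbip
  · obtain ⟨y, hy⟩ := DUnion.exists_adj h₁.exists_adj h₂.exists_adj
      (e.symm (x, Classical.arbitrary W₂))
    have hxy := ((he _ _).mp hy).1
    rw [e.apply_symm_apply] at hxy
    exact absurd hxy (hx _)
  · rw [hB3] at hcount; omega
  · rw [hB4] at hcount; omega

theorem isIso_of_isIso_dunion_dprod {B : W₁ → W₁ → Prop} (hB : Symmetric B)
    (hW₁ : Nat.card W₁ = 2) (h₁ : Conn A₁) (h₂ : Conn A₂) (hbip : ¬ Bipartite A₁)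
    (harc : arcCount A₂ = arcCount A₁) (h2 : ¬ 2 ∣ arcCount A₁) (h3 : ¬ 3 ∣ arcCount A₁)
    (h : IsIso (DUnion A₁ A₂) (DProd B C)) : IsIso A₁ A₂ := by
  have : Finite W₁ := Nat.finite_of_card_ne_zero (by omega)
  let ε : Bool ≃ W₁ := finTwoEquiv.symm.trans (Finite.equivFinOfCardEq hW₁).symm
  exact isIso_of_isIso_dunion_dprod_bool (B := fun x y => B (ε x) (ε y)) (fun _ _ h => hB h)
    h₁ h₂ hbip harc h2 h3 (h.trans ((isIso_comap ε B).symm.dprod_left C))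

end Factor

/-- Theorem 1 of the paper. Let `G₁`, `G₂` be graphs in the class 𝒢,
both with the same (prime) number `n` of vertices, the same number `m` of edges and the
same number `s` of loops. Then the disjoint union `G₁ ⊔ G₂` is composite with respect to
the direct product iff `G₁ ≅ G₂`. -/
theorem stmt2 (n m s : ℕ)
    (A₁ A₂ : Fin n → Fin n → Prop) (hs₁ : Symmetric A₁) (hs₂ : Symmetric A₂)
    (hG₁ : InClassG hs₁) (hG₂ : InClassG hs₂)
    (hm₁ : numEdges hs₁ = m) (hm₂ : numEdges hs₂ = m)
    (hl₁ : numLoops A₁ = s) (hl₂ : numLoops A₂ = s) :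
    Composite (DUnion A₁ A₂) ↔ IsIso A₁ A₂ := by
  obtain ⟨hconn₁, hbip₁, hprime, -, h2, h3⟩ := hG₁
  obtain ⟨hconn₂, -, -, -, -, -⟩ := hG₂
  have : Nontrivial (Fin n) := Fin.nontrivial_iff_two_le.mpr hprime.two_le
  have harc₁ : arcCount A₁ = 2 * m - s := by
    rw [← hm₁, ← hl₁, ← arcCount_add_numLoops hs₁, Nat.add_sub_cancel]
  have harc : arcCount A₂ = arcCount A₁ := by
    rw [harc₁, ← hm₂, ← hl₂, ← arcCount_add_numLoops hs₂, Nat.add_sub_cancel]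
  rw [hm₁, hl₁, ← harc₁] at h2 h3
  constructor
  · rintro ⟨W₁, W₂, B₁, B₂, hB₁, hB₂, hc₁, hc₂, h⟩
    have : Fintype W₂ := @Fintype.ofFinite _ (Nat.finite_of_card_ne_zero (by omega))
    have : Fintype W₁ := @Fintype.ofFinite _ (Nat.finite_of_card_ne_zero (by omega))
    have hcard : Nat.card W₁ * Nat.card W₂ = 2 * n := by
      rw [← Nat.card_prod, ← Nat.card_congr h.choose, Nat.card_sum, Nat.card_fin, two_mul]
    rcases hprime.eq_two_or_eq_two_of_mul_eq hc₁ hc₂ hcard with hW | hW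
    · exact isIso_of_isIso_dunion_dprod hB₁ hW hconn₁ hconn₂ hbip₁ harc h2 h3 h
    · exact isIso_of_isIso_dunion_dprod hB₂ hW hconn₁ hconn₂ hbip₁ harc h2 h3
        (h.trans (isIso_dprod_comm B₁ B₂))
  · intro h
    exact ⟨Bool, Fin n, Eq, A₁, fun _ _ => Eq.symm, hs₁, by simp, by simp [hprime.two_le],
      (h.symm.dunion_right A₁).trans (isIso_dprod_eq_dunion A₁).symm⟩
end

section
/- Let n ≥ 1 and let G₁ = (Fin n, A₁) and G₂ = (Fin n, A₂) be connected, non-bipartite graphs (self-loops allowed) whose adjacency matrices M₁ and M₂ each have exactly k nonzero entries, where k is divisible by neither 2 nor 3. Let M be the (2n)×(2n) block-diagonal matrix with blocks M₁ and M₂. If there exist a permutation matrix P, a 2×2 0-1 matrix A, and an n×n 0-1 matrix B with Pᵀ · M · P = A ⊗ₖ B, then A = I₂, the 2×2 identity matrix. -/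
open Kronecker Matrix

/-- Number of nonzero entries of a 0-1 family equals the sum. -/
lemma ncard_support_eq_sum {I : Type*} [Fintype I] (N : I → ℕ)
    (h01 : ∀ i, N i = 0 ∨ N i = 1) : {i | N i ≠ 0}.ncard = ∑ i, N i := by
  classical
  rw [Set.ncard_eq_toFinset_card', Set.toFinset_setOf, Finset.card_filter]
  refine Finset.sum_congr rfl fun i _ => ?_
  rcases h01 i with h | h <;> simp [h]

/-- In a connected non-bipartite graph every vertex has a neighbor. -/
lemma exists_nbr {n : ℕ} (A' : Fin n → Fin n → Prop) (hc : Conn A')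
    (hb : ¬ Bipartite A') (v : Fin n) : ∃ w, A' v w := by
  by_contra hno
  push_neg at hno
  apply hb
  refine ⟨fun _ => true, fun u w hu => ?_⟩
  exfalso
  have hall : ∀ u : Fin n, u = v := by
    intro u
    rcases (Relation.ReflTransGen.cases_head (hc v u)) with h1 | ⟨w', hw', _⟩
    · exact h1.symm
    · exact absurd hw' (hno w')
  rw [hall u] at hu
  exact hno w hu

/-- Let `G₁`, `G₂` be connected, non-bipartite graphs on `Fin n`
(self-loops allowed) whose adjacency matrices each have exactly `k` nonzero entries,
with `k` divisible by neither `2` nor `3`. If `Pᵀ M P = A ⊗ₖ B` for a permutation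
matrix `P`, a `2×2` 0-1 matrix `A` and an `n×n` 0-1 matrix `B`, where `M` is the
block-diagonal matrix with blocks the two adjacency matrices, then `A = I₂`. -/
theorem stmt3 (n : ℕ) (hn : 1 ≤ n)
    (A₁ A₂ : Fin n → Fin n → Prop) (hs₁ : Symmetric A₁) (hs₂ : Symmetric A₂)
    (hc₁ : Conn A₁) (hc₂ : Conn A₂)
    (hb₁ : ¬ Bipartite A₁) (hb₂ : ¬ Bipartite A₂)
    (k : ℕ) (hk2 : ¬ 2 ∣ k) (hk3 : ¬ 3 ∣ k)
    (hk₁ : {p : Fin n × Fin n | adjMat A₁ p.1 p.2 ≠ 0}.ncard = k)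
    (hk₂ : {p : Fin n × Fin n | adjMat A₂ p.1 p.2 ≠ 0}.ncard = k)
    (M : Matrix (Fin (2 * n)) (Fin (2 * n)) ℕ)
    (hM : M = blockDiag2 (adjMat A₁) (adjMat A₂))
    (π : Equiv.Perm (Fin (2 * n)))
    (A : Matrix (Fin 2) (Fin 2) ℕ) (B : Matrix (Fin n) (Fin n) ℕ)
    (hA : IsZeroOne A) (hB : IsZeroOne B)
    (h : (π.permMatrix ℕ)ᵀ * M * (π.permMatrix ℕ) = kron2 A B) :
    A = (1 : Matrix (Fin 2) (Fin 2) ℕ) := by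
  classical
  set e : Fin (2 * n) ≃ Fin n ⊕ Fin n :=
    (finCongr (two_mul n)).trans finSumFinEquiv.symm with he
  have hMe : ∀ i j, M i j =
      Matrix.fromBlocks (adjMat A₁) 0 0 (adjMat A₂) (e i) (e j) := by
    intro i j
    rw [hM]
    rfl
  -- entry formula
  have hsub : M.submatrix π.symm π.symm = kron2 A B := by
    rw [← h, Equiv.Perm.permMatrix, ← PEquiv.toMatrix_symm, ← Equiv.toPEquiv_symm,
      PEquiv.toMatrix_toPEquiv_mul, PEquiv.mul_toMatrix_toPEquiv,
      Matrix.submatrix_submatrix]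
    rfl
  have hPMP : ∀ w c : Fin (2 * n), M w c =
      (A ⊗ₖ B) (finProdFinEquiv.symm (π w)) (finProdFinEquiv.symm (π c)) := by
    intro w c
    have := congrFun (congrFun hsub (π w)) (π c)
    simpa [kron2] using this
  -- every row of M is nonzero
  have hrow : ∀ w, ∃ c, M w c ≠ 0 := by
    intro w
    rcases hsw : e w with u | u
    · obtain ⟨v, hv⟩ := exists_nbr A₁ hc₁ hb₁ u
      refine ⟨e.symm (Sum.inl v), ?_⟩
      rw [hMe, hsw, e.apply_symm_apply]
      simp only [Matrix.fromBlocks_apply₁₁, adjMat, Matrix.of_apply]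
      rw [if_pos hv]
      exact one_ne_zero
    · obtain ⟨v, hv⟩ := exists_nbr A₂ hc₂ hb₂ u
      refine ⟨e.symm (Sum.inr v), ?_⟩
      rw [hMe, hsw, e.apply_symm_apply]
      simp only [Matrix.fromBlocks_apply₂₂, adjMat, Matrix.of_apply]
      rw [if_pos hv]
      exact one_ne_zero
  -- M symmetric
  have hMs : ∀ i j, M i j = M j i := by
    intro i j
    rw [hMe, hMe]
    rcases hi : e i with u | u <;> rcases hj : e j with v | v
    · simp only [Matrix.fromBlocks_apply₁₁, adjMat, Matrix.of_apply]
      by_cases hA' : A₁ u v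
      · rw [if_pos hA', if_pos (hs₁ hA')]
      · rw [if_neg hA', if_neg (fun hh => hA' (hs₁ hh))]
    · simp
    · simp
    · simp only [Matrix.fromBlocks_apply₂₂, adjMat, Matrix.of_apply]
      by_cases hA' : A₂ u v
      · rw [if_pos hA', if_pos (hs₂ hA')]
      · rw [if_neg hA', if_neg (fun hh => hA' (hs₂ hh))]
  -- counting: total sum of M is 2k
  have hadj01 : ∀ (A' : Fin n → Fin n → Prop) (u v : Fin n),
      adjMat A' u v = 0 ∨ adjMat A' u v = 1 := by
    intro A' u v
    simp only [adjMat, Matrix.of_apply]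
    split <;> simp
  have hsumadj : ∀ (A' : Fin n → Fin n → Prop),
      {p : Fin n × Fin n | adjMat A' p.1 p.2 ≠ 0}.ncard = ∑ u, ∑ v, adjMat A' u v := by
    intro A'
    rw [ncard_support_eq_sum (fun p : Fin n × Fin n => adjMat A' p.1 p.2)
      (fun p => hadj01 A' p.1 p.2), Fintype.sum_prod_type]
  have hsumM : ∑ i, ∑ j, M i j = 2 * k := by
    have h1 : ∑ i, ∑ j, M i j =
        ∑ p : Fin n ⊕ Fin n, ∑ q : Fin n ⊕ Fin n,
          Matrix.fromBlocks (adjMat A₁) 0 0 (adjMat A₂) p q := by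
      rw [← Equiv.sum_comp e (fun p => ∑ q, Matrix.fromBlocks (adjMat A₁) 0 0 (adjMat A₂) p q)]
      refine Finset.sum_congr rfl fun i _ => ?_
      rw [← Equiv.sum_comp e (fun q => Matrix.fromBlocks (adjMat A₁) 0 0 (adjMat A₂) (e i) q)]
      exact Finset.sum_congr rfl fun j _ => hMe i j
    rw [h1]
    have h2 : ∑ p : Fin n ⊕ Fin n, ∑ q : Fin n ⊕ Fin n,
        Matrix.fromBlocks (adjMat A₁) 0 0 (adjMat A₂) p q =
        (∑ u, ∑ v, adjMat A₁ u v) + ∑ u, ∑ v, adjMat A₂ u v := by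
      simp [Fintype.sum_sum_type]
    rw [h2, ← hsumadj A₁, ← hsumadj A₂, hk₁, hk₂]
    ring
  -- counting: total sum of M is (sum A)(sum B)
  have hsum : (∑ i, ∑ j, A i j) * (∑ u, ∑ v, B u v) = 2 * k := by
    rw [← hsumM]
    have key : ∀ p q : Fin 2 × Fin n, (A ⊗ₖ B) p q =
        M (π.symm (finProdFinEquiv p)) (π.symm (finProdFinEquiv q)) := by
      intro p q
      rw [hPMP]
      simp
    set c : (Fin 2 × Fin n) ≃ Fin (2 * n) :=
      (finProdFinEquiv (m := 2) (n := n)).trans π.symm with hcdef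
    have h1 : ∑ p : Fin 2 × Fin n, ∑ q : Fin 2 × Fin n, (A ⊗ₖ B) p q =
        ∑ i, ∑ j, M i j := by
      rw [← Equiv.sum_comp c (fun i => ∑ j, M i j)]
      refine Finset.sum_congr rfl fun p _ => ?_
      rw [← Equiv.sum_comp c (fun j => M (c p) j)]
      exact Finset.sum_congr rfl fun q _ => key p q
    rw [← h1]
    simp only [Fintype.sum_prod_type, Matrix.kroneckerMap_apply]
    rw [Finset.sum_mul_sum Finset.univ Finset.univ
      (fun i => ∑ j, A i j) (fun u => ∑ v, B u v)]
    refine Finset.sum_congr rfl fun i _ => ?_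
    refine Finset.sum_congr rfl fun u _ => ?_
    exact Finset.sum_mul_sum Finset.univ Finset.univ (fun j => A i j) (fun v => B u v)
  -- zero-row / zero-column contradictions
  have u0 : Fin n := ⟨0, hn⟩
  have hzrow : ∀ r : Fin 2, A r 0 = 0 → A r 1 = 0 → False := by
    intro r h0 h1
    have hr : ∀ c : Fin 2, A r c = 0 := by
      intro c
      fin_cases c <;> assumption
    obtain ⟨c, hc⟩ := hrow (π.symm (finProdFinEquiv (r, u0)))
    apply hc
    rw [hPMP]
    simp [Matrix.kroneckerMap_apply, hr]
  have hzcol : ∀ r : Fin 2, A 0 r = 0 → A 1 r = 0 → False := by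
    intro r h0 h1
    have hr : ∀ c : Fin 2, A c r = 0 := by
      intro c
      fin_cases c <;> assumption
    obtain ⟨c, hc⟩ := hrow (π.symm (finProdFinEquiv (r, u0)))
    apply hc
    rw [hMs, hPMP]
    simp [Matrix.kroneckerMap_apply, hr]
  -- anti-diagonal case: bipartite contradiction
  have hX : A 0 0 = 0 → A 1 1 = 0 → False := by
    intro h00 h11
    apply hb₁
    refine ⟨fun u => decide ((finProdFinEquiv.symm (π (e.symm (Sum.inl u)))).1 = 0),
      fun u v huv hcc => ?_⟩
    have hMne : M (e.symm (Sum.inl u)) (e.symm (Sum.inl v)) ≠ 0 := by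
      rw [hMe, e.apply_symm_apply, e.apply_symm_apply]
      simp only [Matrix.fromBlocks_apply₁₁, adjMat, Matrix.of_apply]
      rw [if_pos huv]
      exact one_ne_zero
    rw [hPMP] at hMne
    rw [Matrix.kroneckerMap_apply] at hMne
    have hAne : A (finProdFinEquiv.symm (π (e.symm (Sum.inl u)))).1
        (finProdFinEquiv.symm (π (e.symm (Sum.inl v)))).1 ≠ 0 := by
      intro hz
      rw [hz] at hMne
      simp at hMne
    have hcc' : decide ((finProdFinEquiv.symm (π (e.symm (Sum.inl u)))).1 = 0)
        = decide ((finProdFinEquiv.symm (π (e.symm (Sum.inl v)))).1 = 0) := hcc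
    have hd : ∀ z : Fin 2, z = 0 ∨ z = 1 := by decide
    rcases hd (finProdFinEquiv.symm (π (e.symm (Sum.inl u)))).1 with hx | hx <;>
      rcases hd (finProdFinEquiv.symm (π (e.symm (Sum.inl v)))).1 with hy | hy <;>
      rw [hx, hy] at hAne hcc'
    · exact hAne h00
    · simp at hcc'
    · simp at hcc'
    · exact hAne h11
  -- case bash on entries of A
  rcases hA 0 0 with h00 | h00 <;> rcases hA 0 1 with h01 | h01 <;>
    rcases hA 1 0 with h10 | h10 <;> rcases hA 1 1 with h11 | h11
  · exact absurd h01 (fun _ => hzrow 0 h00 h01)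
  · exact absurd h01 (fun _ => hzrow 0 h00 h01)
  · exact absurd h01 (fun _ => hzrow 0 h00 h01)
  · exact absurd h01 (fun _ => hzrow 0 h00 h01)
  · exact absurd h10 (fun _ => hzrow 1 h10 h11)
  · exact absurd h00 (fun _ => hzcol 0 h00 h10)
  · exact absurd h00 (fun _ => hX h00 h11)
  · -- (0,1,1,1): sum 3
    simp only [Fin.sum_univ_two, h00, h01, h10, h11] at hsum
    omega
  · exact absurd h10 (fun _ => hzrow 1 h10 h11)
  · -- identity
    ext i j
    fin_cases i <;> fin_cases j <;> simp [h00, h01, h10, h11, Matrix.one_apply]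
  · exact absurd h01 (fun _ => hzcol 1 h01 h11)
  · simp only [Fin.sum_univ_two, h00, h01, h10, h11] at hsum
    omega
  · exact absurd h10 (fun _ => hzrow 1 h10 h11)
  · simp only [Fin.sum_univ_two, h00, h01, h10, h11] at hsum
    omega
  · simp only [Fin.sum_univ_two, h00, h01, h10, h11] at hsum
    omega
  · simp only [Fin.sum_univ_two, h00, h01, h10, h11] at hsum
    omega
end

section
/- There exists a connected graph H (self-loops allowed) whose number of vertices is prime such that the disjoint union H ⊔ H is isomorphic to K₂ ⊗ H, where K₂ is the loopless graph on two vertices with a single edge. Since K₂ is not isomorphic to D₂ and also H ⊔ H ≅ D₂ ⊗ H, the graph H ⊔ H admits two factorizations into a 2-vertex factor and an |H|-vertex factor whose 2-vertex factors are not isomorphic to each other. -/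
open Kronecker

/-- `K₂`: the graph on two vertices whose only edge joins the two vertices (no loops). -/
def K2Adj : Fin 2 → Fin 2 → Prop := fun i j => i ≠ j

/-- `D₂`: the graph on two vertices with a loop at each vertex and no other edge. -/
def D2Adj : Fin 2 → Fin 2 → Prop := fun i j => i = j

/-
Take `H = K₂`, connected on a prime number (two) of vertices. Given a 2-colouring `c` of any `H`,
`H ⊔ H ≅ K₂ ⊗ H` by sending the first copy of `v` to `(c v, v)` and the second to `(c v + 1, v)`:
an edge of `K₂ ⊗ H` between the two images would join two vertices of the same colour.
`D₂ ⊗ H ≅ H ⊔ H` holds for every `H`, while `K₂ ≇ D₂` since only `D₂` has loops.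
-/

section

variable {V : Type*} (A : V → V → Prop)

def sumEquivFinTwoProd : V ⊕ V ≃ Fin 2 × V where
  toFun
    | .inl v => (0, v)
    | .inr v => (1, v)
  invFun p := if p.1 = 0 then .inl p.2 else .inr p.2
  left_inv := by rintro (v | v) <;> simp
  right_inv := by rintro ⟨i, v⟩; fin_cases i <;> simp

theorem isIso_dUnion_self_dProd_D2Adj : IsIso (DUnion A A) (DProd D2Adj A) :=
  ⟨sumEquivFinTwoProd, by
    rintro (u | u) (v | v) <;> simp [sumEquivFinTwoProd, DUnion, DProd, D2Adj]⟩

variable {A}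

theorem Fin.ne_iff_eq_add_one {a b : Fin 2} : a ≠ b ↔ a = b + 1 := by
  revert a b; decide

def sumEquivFinTwoProdOfColoring (c : V → Fin 2) : V ⊕ V ≃ Fin 2 × V where
  toFun
    | .inl v => (c v, v)
    | .inr v => (c v + 1, v)
  invFun p := if p.1 = c p.2 then .inl p.2 else .inr p.2
  left_inv := by rintro (v | v) <;> simp
  right_inv := by
    rintro ⟨i, v⟩
    by_cases h : i = c v
    · simp [h]
    · simp only [h, if_false, Prod.mk.injEq, and_true]
      omega

theorem isIso_dUnion_self_dProd_K2Adj (c : V → Fin 2) (hc : ∀ u v, A u v → c u ≠ c v) :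
    IsIso (DUnion A A) (DProd K2Adj A) := by
  have hc' : ∀ u v, A u v → c u = c v + 1 := fun u v h => Fin.ne_iff_eq_add_one.mp (hc u v h)
  refine ⟨sumEquivFinTwoProdOfColoring c, ?_⟩
  rintro (u | u) (v | v) <;>
    simp only [sumEquivFinTwoProdOfColoring, DUnion, DProd, K2Adj, Equiv.coe_fn_mk,
      Fin.ne_iff_eq_add_one, add_left_inj, false_iff, not_and, iff_and_self]
  · exact hc' u v
  · intro h huv
    rw [hc' u v huv, add_assoc, add_right_inj] at h
    exact absurd h (by decide)
  · exact fun h huv => hc u v huv h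
  · exact hc' u v

end

theorem symmetric_K2Adj : Symmetric K2Adj := fun _ _ h => Ne.symm h

theorem conn_K2Adj : Conn K2Adj := by
  intro u v
  by_cases h : u = v
  · exact h ▸ .refl
  · exact .single h

theorem not_isIso_K2Adj_D2Adj : ¬ IsIso K2Adj D2Adj := fun ⟨_, he⟩ =>
  (he 0 0).mpr rfl rfl

/-- There exists a connected graph `H` (self-loops allowed) with a
prime number of vertices such that `H ⊔ H ≅ K₂ ⊗ H`.  Since `K₂ ≇ D₂` and also
`H ⊔ H ≅ D₂ ⊗ H`, the graph `H ⊔ H` admits two factorizations into a 2-vertex factor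
and an `|H|`-vertex factor whose 2-vertex factors are not isomorphic. -/
theorem stmt11 :
    ∃ (p : ℕ) (A : Fin p → Fin p → Prop), Symmetric A ∧ Conn A ∧ p.Prime ∧
      IsIso (DUnion A A) (DProd K2Adj A) ∧
      IsIso (DUnion A A) (DProd D2Adj A) ∧
      ¬ IsIso K2Adj D2Adj :=
  ⟨2, K2Adj, symmetric_K2Adj, conn_K2Adj, Nat.prime_two,
    isIso_dUnion_self_dProd_K2Adj id fun _ _ h => h,
    isIso_dUnion_self_dProd_D2Adj K2Adj, not_isIso_K2Adj_D2Adj⟩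
end

section
/- There exist connected graphs H₁ and H₂ (self-loops allowed) with the same number of vertices and the same number of edges such that: H₁ is not isomorphic to H₂; the disjoint union H₁ ⊔ H₂ is composite with respect to the direct product (indeed it is isomorphic to F ⊗ B for some 2-vertex graph F not isomorphic to D₂ and some graph B); and there is no graph B' with H₁ ⊔ H₂ ≅ D₂ ⊗ B'. -/
/-!
Take the 2-vertex graph `F` with one looped vertex joined to an unlooped one, and put
`H₁ = F ⊗ B₁`, `H₂ = F ⊗ B₂`, where `B₁` is the path `P₄` with loops at three of its vertices and
`B₂` is `K₄` minus an edge. Both are connected with 8 vertices and 15 edges, and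
`H₁ ⊔ H₂ ≅ F ⊗ (B₁ ⊔ B₂)` since `⊗` distributes over `⊔`. The number of loops is an isomorphism
invariant, multiplicative under `⊗` and additive under `⊔`. So `H₁` (3 loops) is not isomorphic
to `H₂` (no loops), `F` (1 loop) is not isomorphic to `D₂` (2 loops), and `H₁ ⊔ H₂` has an odd
number of loops, whereas every `D₂ ⊗ B'` has an even number.
-/

open Kronecker

set_option linter.deprecated false

section General

variable {V₁ V₂ W : Type*} {A₁ : V₁ → V₁ → Prop} {A₂ : V₂ → V₂ → Prop}

instance [DecidableRel A₁] [DecidableRel A₂] : DecidableRel (DProd A₁ A₂) :=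
  fun _ _ => inferInstanceAs (Decidable (_ ∧ _))

theorem Symmetric.dProd (h₁ : Symmetric A₁) (h₂ : Symmetric A₂) : Symmetric (DProd A₁ A₂) :=
  fun _ _ h => ⟨h₁ h.1, h₂ h.2⟩

theorem Symmetric.dUnion (h₁ : Symmetric A₁) (h₂ : Symmetric A₂) : Symmetric (DUnion A₁ A₂)
  | .inl _, .inl _, h => h₁ h
  | .inr _, .inr _, h => h₂ h

theorem isIso_dUnion_dProd (F : W → W → Prop) (B₁ : V₁ → V₁ → Prop) (B₂ : V₂ → V₂ → Prop) :
    IsIso (DUnion (DProd F B₁) (DProd F B₂)) (DProd F (DUnion B₁ B₂)) :=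
  ⟨(Equiv.prodSumDistrib W V₁ V₂).symm, by rintro (_ | _) (_ | _) <;> simp [DUnion, DProd]⟩

theorem IsIso.numLoops_eq (h : IsIso A₁ A₂) : numLoops A₁ = numLoops A₂ := by
  obtain ⟨e, he⟩ := h
  have himage : e '' {u | A₁ u u} = {v | A₂ v v} := by
    ext v
    simp [he]
  rw [numLoops, numLoops, ← himage, Set.ncard_image_of_injective _ e.injective]

theorem numLoops_dProd : numLoops (DProd A₁ A₂) = numLoops A₁ * numLoops A₂ :=
  Set.ncard_prod (s := {u | A₁ u u}) (t := {v | A₂ v v})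

theorem numLoops_dUnion [Finite V₁] [Finite V₂] :
    numLoops (DUnion A₁ A₂) = numLoops A₁ + numLoops A₂ := by
  have hloops : {u | DUnion A₁ A₂ u u} = Sum.inl '' {u | A₁ u u} ∪ Sum.inr '' {v | A₂ v v} := by
    ext (_ | _) <;> simp [DUnion]
  rw [numLoops, numLoops, numLoops, hloops, Set.ncard_union_eq (by simp [Set.disjoint_left]),
    Set.ncard_image_of_injective _ Sum.inl_injective,
    Set.ncard_image_of_injective _ Sum.inr_injective]

theorem conn_of_reflTransGen_root (hs : Symmetric A₁) (r : V₁)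
    (h : ∀ u, Relation.ReflTransGen A₁ r u) : Conn A₁ :=
  haveI : Std.Symm A₁ := ⟨fun _ _ hab => hs hab⟩
  fun u v => (Std.Symm.symm _ _ (h u)).trans (h v)

theorem conn_fin_of_adj_succ {n : ℕ} {A : Fin (n + 1) → Fin (n + 1) → Prop} (hs : Symmetric A)
    (hsucc : ∀ i : Fin n, A i.castSucc i.succ) : Conn A := by
  refine conn_of_reflTransGen_root hs 0 fun u => ?_
  induction u using Fin.induction with
  | zero => rfl
  | succ i ih => exact ih.tail (hsucc i)

/-- Every `(u, b)` is adjacent to some `(r, c)`, and the looped vertex `r` carries a copy of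
`B`. -/
theorem conn_dProd_of_forall_adj {A : V₁ → V₁ → Prop} {B : V₂ → V₂ → Prop} (hA : Symmetric A)
    (hB : Symmetric B) (r : V₁) (hr : ∀ u, A r u) (hBconn : Conn B) (hBnbr : ∀ b, ∃ c, B b c)
    (b₀ : V₂) : Conn (DProd A B) := by
  have hfiber (c : V₂) : Relation.ReflTransGen (DProd A B) (r, b₀) (r, c) :=
    (hBconn b₀ c).lift (r, ·) fun _ _ hbc => ⟨hr r, hbc⟩
  refine conn_of_reflTransGen_root (hA.dProd hB) (r, b₀) ?_
  rintro ⟨u, b⟩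
  obtain ⟨c, hbc⟩ := hBnbr b
  exact (hfiber c).tail ⟨hr u, hB hbc⟩

end General

abbrev oneLoopEdge : Fin 2 → Fin 2 → Prop := fun i j => i = 0 ∨ j = 0

abbrev loopedPath : Fin 4 → Fin 4 → Prop :=
  fun b d => (b = d ∧ b ≠ 3) ∨ b.val + 1 = d.val ∨ d.val + 1 = b.val

abbrev completeMinusEdge : Fin 4 → Fin 4 → Prop :=
  fun b d => b ≠ d ∧ ¬(b = 0 ∧ d = 3) ∧ ¬(b = 3 ∧ d = 0)

theorem symmetric_oneLoopEdge : Symmetric oneLoopEdge := by unfold Symmetric; decide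
theorem symmetric_loopedPath : Symmetric loopedPath := by unfold Symmetric; decide
theorem symmetric_completeMinusEdge : Symmetric completeMinusEdge := by unfold Symmetric; decide

theorem conn_oneLoopEdge_dProd {B : Fin 4 → Fin 4 → Prop} (hB : Symmetric B)
    (hsucc : ∀ i : Fin 3, B i.castSucc i.succ) (hnbr : ∀ b, ∃ c, B b c) :
    Conn (DProd oneLoopEdge B) :=
  conn_dProd_of_forall_adj symmetric_oneLoopEdge hB 0 (by decide)
    (conn_fin_of_adj_succ hB hsucc) hnbr 0

theorem numEdges_oneLoopEdge_dProd_loopedPath :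
    numEdges (symmetric_oneLoopEdge.dProd symmetric_loopedPath) = 15 := by
  rw [numEdges, Set.ncard_eq_toFinset_card']
  decide

theorem numEdges_oneLoopEdge_dProd_completeMinusEdge :
    numEdges (symmetric_oneLoopEdge.dProd symmetric_completeMinusEdge) = 15 := by
  rw [numEdges, Set.ncard_eq_toFinset_card']
  decide

theorem numLoops_oneLoopEdge : numLoops oneLoopEdge = 1 := by
  rw [numLoops, Set.ncard_eq_toFinset_card']
  decide

theorem numLoops_loopedPath : numLoops loopedPath = 3 := by
  rw [numLoops, Set.ncard_eq_toFinset_card']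
  decide

theorem numLoops_completeMinusEdge : numLoops completeMinusEdge = 0 := by
  rw [numLoops, Set.ncard_eq_toFinset_card']
  decide

theorem numLoops_D2Adj : numLoops D2Adj = 2 := by
  show {i : Fin 2 | i = i}.ncard = 2
  rw [Set.ncard_eq_toFinset_card']
  decide

/-- There exist connected graphs `H₁`, `H₂` (self-loops allowed) with
the same number of vertices and the same number of edges such that: `H₁ ≇ H₂`; the
disjoint union `H₁ ⊔ H₂` is composite w.r.t. the direct product — indeed `H₁ ⊔ H₂ ≅ F ⊗ B`
for some 2-vertex graph `F` not isomorphic to `D₂` and some graph `B`; and there is no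
graph `B'` with `H₁ ⊔ H₂ ≅ D₂ ⊗ B'`. -/
theorem stmt12 :
    ∃ (V₁ V₂ : Type) (A₁ : V₁ → V₁ → Prop) (A₂ : V₂ → V₂ → Prop)
      (hs₁ : Symmetric A₁) (hs₂ : Symmetric A₂),
      Conn A₁ ∧ Conn A₂ ∧
      Nat.card V₁ = Nat.card V₂ ∧ numEdges hs₁ = numEdges hs₂ ∧
      ¬ IsIso A₁ A₂ ∧
      (∃ (F : Fin 2 → Fin 2 → Prop) (W : Type) (B : W → W → Prop),
        Symmetric F ∧ Symmetric B ∧ 2 ≤ Nat.card W ∧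
        ¬ IsIso F D2Adj ∧ IsIso (DUnion A₁ A₂) (DProd F B)) ∧
      Composite (DUnion A₁ A₂) ∧
      ¬ ∃ (W : Type) (B' : W → W → Prop), Symmetric B' ∧
          IsIso (DUnion A₁ A₂) (DProd D2Adj B') := by
  have hF := symmetric_oneLoopEdge
  have hB := symmetric_loopedPath.dUnion symmetric_completeMinusEdge
  have hiso := isIso_dUnion_dProd oneLoopEdge loopedPath completeMinusEdge
  have hcard : 2 ≤ Nat.card (Fin 4 ⊕ Fin 4) := by simp
  have hunionLoops : numLoops (DUnion (DProd oneLoopEdge loopedPath)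
      (DProd oneLoopEdge completeMinusEdge)) = 3 := by
    rw [numLoops_dUnion, numLoops_dProd, numLoops_dProd, numLoops_oneLoopEdge,
      numLoops_loopedPath, numLoops_completeMinusEdge]
  refine ⟨_, _, _, _, hF.dProd symmetric_loopedPath, hF.dProd symmetric_completeMinusEdge,
    conn_oneLoopEdge_dProd symmetric_loopedPath (by decide) (by decide),
    conn_oneLoopEdge_dProd symmetric_completeMinusEdge (by decide) (by decide), rfl,
    numEdges_oneLoopEdge_dProd_loopedPath.trans numEdges_oneLoopEdge_dProd_completeMinusEdge.symm,
    fun h => ?_, ⟨oneLoopEdge, _, _, hF, hB, hcard, fun h => ?_, hiso⟩,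
    ⟨Fin 2, _, _, _, hF, hB, by simp, hcard, hiso⟩, ?_⟩
  · have hloops := h.numLoops_eq
    rw [numLoops_dProd, numLoops_dProd, numLoops_oneLoopEdge, numLoops_loopedPath,
      numLoops_completeMinusEdge] at hloops
    omega
  · have hloops := h.numLoops_eq
    rw [numLoops_oneLoopEdge, numLoops_D2Adj] at hloops
    omega
  · rintro ⟨W, B', -, h⟩
    have hloops := h.numLoops_eq
    rw [hunionLoops, numLoops_dProd, numLoops_D2Adj] at hloops
    omega
end
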